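/- With the same setup (P nonempty, maximum-rank solution X* = U Z* Uᵀ with U = [[I_r],[U₀]], Z* ≻ 0, Y_U = −U₀ᵀ, Ω* = {X : ‖X − X*‖₂ < σ_r(X*)}): for every X ∈ 𝒲(ℝ) ∩ Ω*, the matrix Y with X·[[Y],[I_{n-r}]] = 0 is unique and equals Y_U. -/

import Mathlib

open Matrix
open scoped Matrix.Norms.L2Operator

/-- `svals A i` is the `(i+1)`-th largest singular value of `A`. -/
noncomputable def svals {p q : Type*} [Fintype p] [Fintype q] [DecidableEq q]
    (A : Matrix p q ℝ) (i : ℕ) : ℝ :=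
  if h : i < Fintype.card q then
    Real.sqrt ((show (Aᵀ * A).IsHermitian by
      rw [Matrix.IsHermitian, Matrix.conjTranspose_eq_transpose_of_trivial, Matrix.transpose_mul,
        Matrix.transpose_transpose]).eigenvalues₀
      (Tuple.sort (show (Aᵀ * A).IsHermitian by
      rw [Matrix.IsHermitian, Matrix.conjTranspose_eq_transpose_of_trivial, Matrix.transpose_mul,
        Matrix.transpose_transpose]).eigenvalues₀
        ⟨Fintype.card q - 1 - i, by omega⟩))
  else 0

lemma quad_lower {n' : Type*} [Fintype n'] [DecidableEq n'] {C : Matrix n' n' ℝ}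
    (hC : C.IsHermitian) {s : ℝ}
    (hsle : ∀ i, hC.eigenvalues i ≠ 0 → s ≤ hC.eigenvalues i)
    (u : n' → ℝ) :
    s * ((C *ᵥ u) ⬝ᵥ (C *ᵥ u)) ≤ (C *ᵥ u) ⬝ᵥ C *ᵥ (C *ᵥ u) := by
  set lam := hC.eigenvalues with hlam
  set V := (hC.eigenvectorUnitary : Matrix n' n' ℝ) with hVdef
  have hmem := Unitary.mem_iff.mp hC.eigenvectorUnitary.2
  have hsV : star V * V = 1 := hmem.1
  have hVs : V * star V = 1 := hmem.2
  have hstar : star V = Vᵀ := by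
    rw [star_eq_conjTranspose, conjTranspose_eq_transpose_of_trivial]
  set D : Matrix n' n' ℝ := diagonal (RCLike.ofReal ∘ lam) with hDdef
  have hspec : C = V * D * star V := hC.spectral_theorem
  have hCV : C * V = V * D := by
    conv_lhs => rw [hspec]
    rw [mul_assoc, hsV, mul_one]
  set v := C *ᵥ u with hvdef
  set w := star V *ᵥ v with hwdef
  have hv1 : v = V *ᵥ w := by
    rw [hwdef, mulVec_mulVec, hVs, one_mulVec]
  have hw0 : ∀ i, lam i = 0 → w i = 0 := by
    intro i hi
    have hsVC : star V * C = D * star V := by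
      conv_lhs => rw [hspec]
      rw [← mul_assoc, ← mul_assoc, hsV, one_mul]
    have : w = D *ᵥ (star V *ᵥ u) := by
      rw [hwdef, hvdef, mulVec_mulVec, hsVC, ← mulVec_mulVec]
    rw [this, hDdef, mulVec_diagonal]
    simp [hi]
  have hkey : ∀ y : n' → ℝ, (V *ᵥ w) ⬝ᵥ (V *ᵥ y) = w ⬝ᵥ y := by
    intro y
    rw [dotProduct_mulVec, ← vecMul_transpose, vecMul_vecMul, ← hstar, hsV, vecMul_one]
  have hVD : C *ᵥ v = V *ᵥ (D *ᵥ w) := by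
    conv_lhs => rw [hv1, mulVec_mulVec, hCV, ← mulVec_mulVec]
  rw [hVD]
  conv_lhs => rw [hv1, hkey w]
  conv_rhs => rw [hv1, hkey (D *ᵥ w)]
  have hsum : w ⬝ᵥ (D *ᵥ w) = ∑ i, lam i * (w i * w i) := by
    unfold dotProduct
    refine Finset.sum_congr rfl fun i _ => ?_
    rw [hDdef, mulVec_diagonal]
    simp [mul_comm, mul_left_comm, mul_assoc]
  rw [hsum]
  unfold dotProduct
  rw [Finset.mul_sum]
  refine Finset.sum_le_sum fun i _ => ?_
  rcases eq_or_ne (lam i) 0 with h | h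
  · rw [hw0 i h]; simp [h]
  · have h1 : s ≤ lam i := hsle i h
    have h2 : 0 ≤ w i * w i := mul_self_nonneg _
    nlinarith

lemma sorted_min {n' : Type*} [Fintype n'] [DecidableEq n'] {C : Matrix n' n' ℝ}
    (hC : C.IsHermitian) (hnn : ∀ i, 0 ≤ hC.eigenvalues i)
    {m' : ℕ} (hm : Fintype.card {i // hC.eigenvalues i = 0} = m')
    (hlt : m' < Fintype.card n') {i : n'} (hi : hC.eigenvalues i ≠ 0) :
    hC.eigenvalues₀ (Tuple.sort hC.eigenvalues₀ ⟨m', hlt⟩) ≤ hC.eigenvalues i := by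
  set N := Fintype.card n' with hN
  set g := hC.eigenvalues₀ with hg
  set σ := Tuple.sort g with hσ
  have hmono : Monotone (g ∘ σ) := Tuple.monotone_sort g
  set e : Fin N ≃ n' := Fintype.equivOfCardEq (Fintype.card_fin _) with he
  have hev : ∀ q : Fin N, hC.eigenvalues (e q) = g q := by
    intro q
    show g (e.symm (e q)) = g q
    rw [Equiv.symm_apply_apply]
  have hgnn : ∀ q : Fin N, 0 ≤ g q := fun q => (hev q) ▸ hnn (e q)
  have hcard : Fintype.card {p : Fin N // g (σ p) = 0} = m' := by
    rw [← hm]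
    refine Fintype.card_congr ?_
    refine (Equiv.subtypeEquiv (σ.trans e) fun p => ?_)
    simp [hev]
  have hzero : ∀ p : Fin N, p.val < m' → g (σ p) = 0 := by
    intro p hp
    by_contra hne
    have hpos : 0 < g (σ p) := lt_of_le_of_ne (hgnn _) (Ne.symm hne)
    have hinj : Function.Injective
        (fun q : {q : Fin N // g (σ q) = 0} => (⟨q.1.val, by
          rcases q with ⟨q, hq⟩
          by_contra hge
          push_neg at hge
          have : g (σ p) ≤ g (σ q) := hmono (by exact Fin.mk_le_mk.mpr hge)
          rw [hq] at this
          exact absurd this (not_le.mpr hpos)⟩ : Fin p.val)) := by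
      intro a b hab
      simp only [Fin.mk.injEq] at hab
      exact Subtype.ext (Fin.ext hab)
    have := Fintype.card_le_of_injective _ hinj
    rw [hcard, Fintype.card_fin] at this
    omega
  set p := σ.symm (e.symm i) with hp
  have hgp : g (σ p) = hC.eigenvalues i := by
    rw [hp, Equiv.apply_symm_apply]
    conv_rhs => rw [show i = e (e.symm i) from (Equiv.apply_symm_apply e i).symm, hev]
  have hple : m' ≤ p.val := by
    by_contra hlt'
    push_neg at hlt'
    exact hi (hgp ▸ hzero p hlt')
  calc g (σ ⟨m', hlt⟩) ≤ g (σ p) := hmono (by exact hple)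
    _ = hC.eigenvalues i := hgp


set_option maxHeartbeats 1000000 in
/-- Uniqueness of the kernel matrix: with the same setup as the facial-reduction
lemma, for every `X ∈ 𝒲(ℝ) ∩ Ω*` the matrix `Y` with `X·[[Y],[I]] = 0` is unique
and equals `Y_U = −U₀ᵀ`. -/
theorem stmt11 {r m k : ℕ}
    (A : Matrix (Fin r ⊕ Fin m) (Fin r ⊕ Fin m) ℝ →ₗ[ℝ] (Fin k → ℝ)) (b : Fin k → ℝ)
    (U₀ : Matrix (Fin m) (Fin r) ℝ) (Zs : Matrix (Fin r) (Fin r) ℝ) (hZs : Zs.PosDef)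
    (Xs : Matrix (Fin r ⊕ Fin m) (Fin r ⊕ Fin m) ℝ)
    (hXsdef : Xs = Matrix.fromRows (1 : Matrix (Fin r) (Fin r) ℝ) U₀ * Zs *
      (Matrix.fromRows (1 : Matrix (Fin r) (Fin r) ℝ) U₀)ᵀ)
    (hXsP : A Xs = b ∧ Xs.PosSemidef)
    (hmax : ∀ X : Matrix (Fin r ⊕ Fin m) (Fin r ⊕ Fin m) ℝ,
      A X = b → X.PosSemidef → X.rank ≤ r) :
    ∀ X : Matrix (Fin r ⊕ Fin m) (Fin r ⊕ Fin m) ℝ,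
      X.IsHermitian → A X = b →
      (∃ Y : Matrix (Fin r) (Fin m) ℝ,
        X * Matrix.fromRows Y (1 : Matrix (Fin m) (Fin m) ℝ) = 0) →
      ‖X - Xs‖ < svals Xs (r - 1) →
      ∀ Y : Matrix (Fin r) (Fin m) ℝ,
        X * Matrix.fromRows Y (1 : Matrix (Fin m) (Fin m) ℝ) = 0 → Y = -U₀ᵀ := by
  intro X hX hAX _hexY hlt Y hXW
  -- trivial case m = 0
  rcases Nat.eq_zero_or_pos m with hm0 | hmpos
  · ext i j
    exact absurd j.isLt (by omega)
  -- notation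
  set B := Xsᵀ * Xs with hBdef
  have hB : (Xsᵀ * Xs).IsHermitian := by
    rw [Matrix.IsHermitian, Matrix.conjTranspose_eq_transpose_of_trivial, Matrix.transpose_mul,
      Matrix.transpose_transpose]
  have hBev : ∀ q : Fin (Fintype.card (Fin r ⊕ Fin m)),
      hB.eigenvalues₀ q = hB.eigenvalues
        ((Fintype.equivOfCardEq (Fintype.card_fin _) : Fin (Fintype.card (Fin r ⊕ Fin m)) ≃ (Fin r ⊕ Fin m)) q) := by
    intro q
    show hB.eigenvalues₀ q = hB.eigenvalues₀ (Equiv.symm _ _)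
    rw [Equiv.symm_apply_apply]
  have hBpsd : (Xsᵀ * Xs).PosSemidef := by
    have := Matrix.posSemidef_conjTranspose_mul_self Xs
    rwa [conjTranspose_eq_transpose_of_trivial] at this
  have hBnn : ∀ i, 0 ≤ hB.eigenvalues i := fun i => hBpsd.eigenvalues_nonneg i
  -- degenerate case r = 0
  rcases Nat.eq_zero_or_pos r with hr0 | hrpos
  · exfalso
    subst hr0
    have hXs0 : Xs = 0 := by
      rw [hXsdef]
      ext i j
      simp [Matrix.mul_apply]
    have hBrank : B.rank = 0 := by
      rw [hBdef, Matrix.rank_transpose_mul_self, hXs0, Matrix.rank_zero]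
    have hall : ∀ i, hB.eigenvalues i = 0 := by
      intro i
      by_contra hne
      have hcard := hB.rank_eq_card_non_zero_eigs
      rw [hBrank] at hcard
      have : IsEmpty {i // hB.eigenvalues i ≠ 0} := Fintype.card_eq_zero_iff.mp hcard.symm
      exact this.false ⟨i, hne⟩
    have hs0 : svals Xs (0 - 1) = 0 := by
      unfold svals
      rw [dif_pos (by simp; omega)]
      rw [hBev, hall, Real.sqrt_zero]
    rw [hs0] at hlt
    exact absurd hlt (not_lt.mpr (norm_nonneg _))
  -- main case
  set U : Matrix (Fin r ⊕ Fin m) (Fin r) ℝ :=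
    Matrix.fromRows (1 : Matrix (Fin r) (Fin r) ℝ) U₀ with hUdef
  set W : Matrix (Fin r ⊕ Fin m) (Fin m) ℝ :=
    Matrix.fromRows Y (1 : Matrix (Fin m) (Fin m) ℝ) with hWdef
  have hXs_herm : Xs.IsHermitian := hXsP.2.1
  have hXsT : Xsᵀ = Xs := by
    rw [← conjTranspose_eq_transpose_of_trivial]; exact hXs_herm
  have hXT : Xᵀ = X := by
    rw [← conjTranspose_eq_transpose_of_trivial]; exact hX
  have hUtU : Uᵀ * U = 1 + U₀ᵀ * U₀ := by
    rw [hUdef, transpose_fromRows, fromCols_mul_fromRows]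
    simp
  have hU₀psd : (U₀ᵀ * U₀).PosSemidef := by
    have := Matrix.posSemidef_conjTranspose_mul_self U₀
    rwa [conjTranspose_eq_transpose_of_trivial] at this
  have hUtUpd : (Uᵀ * U).PosDef := by
    rw [hUtU]
    exact Matrix.PosDef.add_posSemidef Matrix.PosDef.one hU₀psd
  have hXsU : Xs = U * Zs * Uᵀ := hXsdef
  -- rank Xs = r and invertibility facts
  have hMcompute : Uᵀ * Xs * U = (Uᵀ * U) * Zs * (Uᵀ * U) := by
    rw [hXsU]
    simp only [Matrix.mul_assoc]
  have hMunit : IsUnit ((Uᵀ * U) * Zs * (Uᵀ * U)) :=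
    (hUtUpd.isUnit.mul hZs.isUnit).mul hUtUpd.isUnit
  have hrankXsU : (Uᵀ * Xs * U).rank = r := by
    rw [hMcompute, Matrix.rank_of_isUnit _ hMunit, Fintype.card_fin]
  have hrankXs_ge : r ≤ Xs.rank := by
    calc r = (Uᵀ * Xs * U).rank := hrankXsU.symm
      _ ≤ (Xs * U).rank := by
          rw [Matrix.mul_assoc]
          exact Matrix.rank_mul_le_right _ _
      _ ≤ Xs.rank := Matrix.rank_mul_le_left _ _
  have hrankXs : Xs.rank = r :=
    le_antisymm (hmax Xs hXsP.1 hXsP.2) hrankXs_ge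
  -- eigenvalue count for B
  have hrankB : B.rank = r := by
    rw [hBdef, Matrix.rank_transpose_mul_self, hrankXs]
  have hmB : Fintype.card {i // hB.eigenvalues i = 0} = m := by
    have h1 := hB.rank_eq_card_non_zero_eigs
    rw [hrankB] at h1
    have h2 := Fintype.card_subtype_compl (fun i => hB.eigenvalues i = 0)
    rw [← h1] at h2
    have h3 : Fintype.card (Fin r ⊕ Fin m) = r + m := by simp
    rw [h3] at h2
    have h4 : Fintype.card {i // hB.eigenvalues i = 0} ≤ r + m := by
      rw [← h3]; exact Fintype.card_subtype_le _
    omega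
  have hm_lt : m < Fintype.card (Fin r ⊕ Fin m) := by simp; omega
  -- the value of svals
  have hsval : svals Xs (r - 1) =
      Real.sqrt (hB.eigenvalues₀ (Tuple.sort hB.eigenvalues₀ ⟨m, hm_lt⟩)) := by
    unfold svals
    rw [dif_pos (by simp; omega)]
    have hidx : ∀ (h : Fintype.card (Fin r ⊕ Fin m) - 1 - (r - 1) <
        Fintype.card (Fin r ⊕ Fin m)),
        (⟨Fintype.card (Fin r ⊕ Fin m) - 1 - (r - 1), h⟩ :
          Fin (Fintype.card (Fin r ⊕ Fin m))) = ⟨m, hm_lt⟩ :=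
      fun h => Fin.ext (by simp; omega)
    rw [hidx]
  have hs_nonneg : 0 ≤ svals Xs (r - 1) := by
    rw [hsval]; exact Real.sqrt_nonneg _
  -- key spectral bound: svals Xs (r-1) ≤ every nonzero eigenvalue of Xs
  have hBsorted : ∀ j, hB.eigenvalues j ≠ 0 →
      hB.eigenvalues₀ (Tuple.sort hB.eigenvalues₀ ⟨m, hm_lt⟩) ≤ hB.eigenvalues j :=
    fun j hj => sorted_min hB hBnn hmB hm_lt hj
  have hsmin : ∀ i, hXs_herm.eigenvalues i ≠ 0 →
      svals Xs (r - 1) ≤ hXs_herm.eigenvalues i := by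
    intro i hi
    set lam := hXs_herm.eigenvalues i with hlamdef
    have hlampos : 0 < lam := lt_of_le_of_ne (hXsP.2.eigenvalues_nonneg i) (Ne.symm hi)
    set u : (Fin r ⊕ Fin m) → ℝ := ⇑(hXs_herm.eigenvectorBasis i) with hudef
    have hXu : Xs *ᵥ u = lam • u := hXs_herm.mulVec_eigenvectorBasis i
    have hBu : B *ᵥ u = (lam * lam) • u := by
      rw [hBdef, ← mulVec_mulVec, hXu, mulVec_smul, hXsT, hXu, smul_smul]
    have hu0 : u ≠ 0 := by
      intro h
      have h1 := hXs_herm.eigenvectorBasis.orthonormal.1 i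
      have h2 : hXs_herm.eigenvectorBasis i = 0 := by ext j; simpa [hudef] using congrFun h j
      rw [h2, norm_zero] at h1
      norm_num at h1
    have huu : 0 < u ⬝ᵥ u :=
      lt_of_le_of_ne (Finset.sum_nonneg fun j _ => mul_self_nonneg _)
        (Ne.symm (fun h => hu0 (dotProduct_self_eq_zero.mp h)))
    set u' := (lam * lam)⁻¹ • u with hu'def
    have hBu' : B *ᵥ u' = u := by
      rw [hu'def, mulVec_smul, hBu, smul_smul, inv_mul_cancel₀ (by positivity), one_smul]
    have hq := quad_lower hB hBsorted u'
    rw [hBu'] at hq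
    have hqr : u ⬝ᵥ B *ᵥ u = (lam * lam) * (u ⬝ᵥ u) := by
      rw [hBu, dotProduct_smul, smul_eq_mul]
    rw [hqr] at hq
    have hle2 : hB.eigenvalues₀ (Tuple.sort hB.eigenvalues₀ ⟨m, hm_lt⟩) ≤ lam * lam :=
      le_of_mul_le_mul_right (by linarith) huu
    rw [hsval]
    calc Real.sqrt (hB.eigenvalues₀ (Tuple.sort hB.eigenvalues₀ ⟨m, hm_lt⟩))
        ≤ Real.sqrt (lam * lam) := Real.sqrt_le_sqrt hle2
      _ = lam := Real.sqrt_mul_self hlampos.le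
  -- quadratic lower bound for Xs on its range
  have hXsq : ∀ c : (Fin r ⊕ Fin m) → ℝ,
      svals Xs (r - 1) * ((Xs *ᵥ c) ⬝ᵥ (Xs *ᵥ c)) ≤ (Xs *ᵥ c) ⬝ᵥ Xs *ᵥ (Xs *ᵥ c) :=
    fun c => quad_lower hXs_herm hsmin c
  -- range of U is inside range of Xs
  have hrange : ∀ a : Fin r → ℝ, ∃ c, Xs *ᵥ c = U *ᵥ a := by
    intro a
    have hZU : IsUnit (Zs * (Uᵀ * U)) := hZs.isUnit.mul hUtUpd.isUnit
    refine ⟨U *ᵥ ((Zs * (Uᵀ * U))⁻¹ *ᵥ a), ?_⟩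
    rw [hXsU, mulVec_mulVec, mulVec_mulVec]
    have : U * Zs * Uᵀ * U * (Zs * (Uᵀ * U))⁻¹ = U := by
      have h1 : U * Zs * Uᵀ * U * (Zs * (Uᵀ * U))⁻¹
          = U * ((Zs * (Uᵀ * U)) * (Zs * (Uᵀ * U))⁻¹) := by
        simp only [Matrix.mul_assoc]
      rw [h1, Matrix.mul_nonsing_inv _ ((Matrix.isUnit_iff_isUnit_det _).mp hZU), Matrix.mul_one]
    rw [this]
  -- operator norm bound for the perturbation
  have hEbound : ∀ v : (Fin r ⊕ Fin m) → ℝ,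
      |v ⬝ᵥ ((X - Xs) *ᵥ v)| ≤ ‖X - Xs‖ * (v ⬝ᵥ v) := by
    intro v
    set E := X - Xs with hEdef
    set v' : EuclideanSpace ℝ (Fin r ⊕ Fin m) := (WithLp.equiv 2 _).symm v with hv'def
    set Ev' : EuclideanSpace ℝ (Fin r ⊕ Fin m) := (WithLp.equiv 2 _).symm (E *ᵥ v) with hEv'def
    have hvv : v ⬝ᵥ v = ‖v'‖ * ‖v'‖ := by
      have h1 : (inner ℝ v' v' : ℝ) = v ⬝ᵥ v := by
        show v ⬝ᵥ star v = v ⬝ᵥ v; rw [star_trivial]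
      rw [← h1, real_inner_self_eq_norm_mul_norm]
    have hEv : ‖Ev'‖ ≤ ‖E‖ * ‖v'‖ := Matrix.l2_opNorm_mulVec E v'
    have hinner : (inner ℝ v' Ev' : ℝ) = v ⬝ᵥ (E *ᵥ v) := by
      show (E *ᵥ v) ⬝ᵥ star v = _; rw [star_trivial, dotProduct_comm]
    calc |v ⬝ᵥ (E *ᵥ v)| = |(inner ℝ v' Ev' : ℝ)| := by rw [hinner]
      _ ≤ ‖v'‖ * ‖Ev'‖ := abs_real_inner_le_norm _ _
      _ ≤ ‖v'‖ * (‖E‖ * ‖v'‖) := by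
          apply mul_le_mul_of_nonneg_left hEv (norm_nonneg _)
      _ = ‖E‖ * (v ⬝ᵥ v) := by rw [hvv]; ring
  -- quadratic identity
  have hquadeq : ∀ a : Fin r → ℝ,
      a ⬝ᵥ ((Uᵀ * X * U) *ᵥ a) = (U *ᵥ a) ⬝ᵥ (X *ᵥ (U *ᵥ a)) := by
    intro a
    rw [← mulVec_mulVec, ← mulVec_mulVec, dotProduct_mulVec a Uᵀ, vecMul_transpose]
  -- positive definiteness of Uᵀ X U
  have hposA : ∀ a : Fin r → ℝ, a ≠ 0 → 0 < a ⬝ᵥ ((Uᵀ * X * U) *ᵥ a) := by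
    intro a ha
    set v := U *ᵥ a with hvdef
    have hv0 : v ≠ 0 := by
      intro h
      apply ha
      funext i
      have h1 := congrFun h (Sum.inl i)
      rw [hvdef, hUdef] at h1
      simpa using h1
    have hvv : 0 < v ⬝ᵥ v :=
      lt_of_le_of_ne (Finset.sum_nonneg fun j _ => mul_self_nonneg _)
        (Ne.symm (fun h => hv0 (dotProduct_self_eq_zero.mp h)))
    rw [hquadeq]
    obtain ⟨c, hc⟩ := hrange a
    have h1 : svals Xs (r - 1) * (v ⬝ᵥ v) ≤ v ⬝ᵥ (Xs *ᵥ v) := by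
      have := hXsq c
      rw [hc] at this
      exact this
    have h2 := hEbound v
    have h3 : v ⬝ᵥ (X *ᵥ v) = v ⬝ᵥ (Xs *ᵥ v) + v ⬝ᵥ ((X - Xs) *ᵥ v) := by
      rw [Matrix.sub_mulVec, dotProduct_sub]
      ring
    have h4 := (abs_le.mp h2).1
    nlinarith
  -- X is positive semidefinite
  have hQsurj : Function.Surjective (Matrix.fromCols U W).mulVec := by
    rw [Matrix.mulVec_surjective_iff_isUnit]
    rw [← Matrix.mulVec_injective_iff_isUnit]
    intro x y hxy
    have hker : ∀ p, Matrix.fromCols U W *ᵥ p = 0 → p = 0 := by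
      intro p hp
      have hps : p = Sum.elim (p ∘ Sum.inl) (p ∘ Sum.inr) := by
        funext x'; cases x' <;> rfl
      rw [hps, fromCols_mulVec_sumElim] at hp
      set a := p ∘ Sum.inl with hadef
      set c := p ∘ Sum.inr with hcdef
      have hXW0 : X *ᵥ (W *ᵥ c) = 0 := by
        rw [mulVec_mulVec, hXW, Matrix.zero_mulVec]
      have hXUa : X *ᵥ (U *ᵥ a) = 0 := by
        have : U *ᵥ a = -(W *ᵥ c) := eq_neg_of_add_eq_zero_left hp
        rw [this, Matrix.mulVec_neg, hXW0, neg_zero]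
      have ha : a = 0 := by
        by_contra ha
        have := hposA a ha
        rw [hquadeq, hXUa, dotProduct_zero] at this
        exact lt_irrefl 0 this
      have hWc : W *ᵥ c = 0 := by
        rw [ha, Matrix.mulVec_zero, zero_add] at hp
        exact hp
      have hc : c = 0 := by
        funext j
        have h1 := congrFun hWc (Sum.inr j)
        rw [hWdef] at h1
        simpa using h1
      funext x'
      cases x' with
      | inl i => exact congrFun ha i
      | inr j => exact congrFun hc j
    have := hker (x - y) (by rw [Matrix.mulVec_sub, hxy, sub_self])
    exact sub_eq_zero.mp this
  have hXpsd : X.PosSemidef := by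
    refine Matrix.PosSemidef.of_dotProduct_mulVec_nonneg hX fun x => ?_
    obtain ⟨p, hp⟩ := hQsurj x
    have hps : p = Sum.elim (p ∘ Sum.inl) (p ∘ Sum.inr) := by
      funext x'; cases x' <;> rfl
    rw [hps, fromCols_mulVec_sumElim] at hp
    set a := p ∘ Sum.inl with hadef
    set c := p ∘ Sum.inr with hcdef
    have hXWc : X *ᵥ (W *ᵥ c) = 0 := by
      rw [mulVec_mulVec, hXW, Matrix.zero_mulVec]
    have hWcX : (W *ᵥ c) ⬝ᵥ (X *ᵥ (U *ᵥ a)) = 0 := by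
      rw [dotProduct_mulVec, ← Matrix.mulVec_transpose, hXT, hXWc, zero_dotProduct]
    have hexp : star x ⬝ᵥ (X *ᵥ x) = (U *ᵥ a) ⬝ᵥ (X *ᵥ (U *ᵥ a)) := by
      rw [star_trivial, ← hp]
      rw [Matrix.mulVec_add, hXWc, add_zero, add_dotProduct, hWcX, add_zero]
    rw [hexp]
    rcases eq_or_ne a 0 with h | h
    · rw [h, Matrix.mulVec_zero]
      simp
    · have := hposA a h
      rw [hquadeq] at this
      exact this.le
  -- the midpoint matrix
  set C₂ : Matrix (Fin r ⊕ Fin m) (Fin r ⊕ Fin m) ℝ := (2:ℝ)⁻¹ • (X + Xs) with hC₂def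
  have hAC₂ : A C₂ = b := by
    rw [hC₂def, LinearMap.map_smul, LinearMap.map_add, hAX, hXsP.1]
    funext j
    simp
    ring
  have hC₂psd : C₂.PosSemidef := by
    refine Matrix.PosSemidef.of_dotProduct_mulVec_nonneg ?_ ?_
    · show C₂ᴴ = C₂
      rw [hC₂def, conjTranspose_smul, conjTranspose_add, hX, hXs_herm]
      simp
    · intro x
      have h1 := hXpsd.dotProduct_mulVec_nonneg x
      have h2 := hXsP.2.dotProduct_mulVec_nonneg x
      have h3 : star x ⬝ᵥ (C₂ *ᵥ x) = (2:ℝ)⁻¹ * (star x ⬝ᵥ (X *ᵥ x) + star x ⬝ᵥ (Xs *ᵥ x)) := by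
        rw [hC₂def, Matrix.smul_mulVec, dotProduct_smul, Matrix.add_mulVec,
          dotProduct_add, smul_eq_mul]
      rw [h3]
      positivity
  have hrankC₂ : C₂.rank ≤ r := hmax C₂ hAC₂ hC₂psd
  -- rank of X is at least r
  have hUXUpd : (Uᵀ * X * U).PosDef := by
    refine Matrix.PosDef.of_dotProduct_mulVec_pos ?_ ?_
    · show (Uᵀ * X * U)ᴴ = Uᵀ * X * U
      rw [conjTranspose_eq_transpose_of_trivial, Matrix.transpose_mul, Matrix.transpose_mul,
        transpose_transpose, hXT, Matrix.mul_assoc]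
    · intro x hx
      rw [star_trivial]
      exact hposA x hx
  have hrankX_ge : r ≤ X.rank := by
    calc r = (Uᵀ * X * U).rank := by
          rw [Matrix.rank_of_isUnit _ hUXUpd.isUnit, Fintype.card_fin]
      _ ≤ (X * U).rank := by
          rw [Matrix.mul_assoc]
          exact Matrix.rank_mul_le_right _ _
      _ ≤ X.rank := Matrix.rank_mul_le_left _ _
  -- kernel inclusions
  have hkCX : LinearMap.ker C₂.mulVecLin ≤ LinearMap.ker X.mulVecLin := by
    intro x hx
    rw [LinearMap.mem_ker, Matrix.mulVecLin_apply] at hx ⊢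
    have hXXs : (X + Xs) *ᵥ x = 0 := by
      have h1 : C₂ *ᵥ x = (2:ℝ)⁻¹ • ((X + Xs) *ᵥ x) := by
        rw [hC₂def, Matrix.smul_mulVec]
      rw [hx] at h1
      have := h1.symm
      rcases smul_eq_zero.mp this with h | h
      · norm_num at h
      · exact h
    have hsum : x ⬝ᵥ (X *ᵥ x) + x ⬝ᵥ (Xs *ᵥ x) = 0 := by
      have := congrArg (fun y => x ⬝ᵥ y) hXXs
      simpa [Matrix.add_mulVec, dotProduct_add] using this
    have h1 := hXpsd.dotProduct_mulVec_nonneg x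
    have h2 := hXsP.2.dotProduct_mulVec_nonneg x
    rw [star_trivial] at h1 h2
    have hz : x ⬝ᵥ (X *ᵥ x) = 0 := by linarith
    have := (hXpsd.dotProduct_mulVec_zero_iff x).mp (by rw [star_trivial]; exact hz)
    exact this
  have hkCXs : LinearMap.ker C₂.mulVecLin ≤ LinearMap.ker Xs.mulVecLin := by
    intro x hx
    rw [LinearMap.mem_ker, Matrix.mulVecLin_apply] at hx ⊢
    have hXXs : (X + Xs) *ᵥ x = 0 := by
      have h1 : C₂ *ᵥ x = (2:ℝ)⁻¹ • ((X + Xs) *ᵥ x) := by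
        rw [hC₂def, Matrix.smul_mulVec]
      rw [hx] at h1
      rcases smul_eq_zero.mp h1.symm with h | h
      · norm_num at h
      · exact h
    have hsum : x ⬝ᵥ (X *ᵥ x) + x ⬝ᵥ (Xs *ᵥ x) = 0 := by
      have := congrArg (fun y => x ⬝ᵥ y) hXXs
      simpa [Matrix.add_mulVec, dotProduct_add] using this
    have h1 := hXpsd.dotProduct_mulVec_nonneg x
    have h2 := hXsP.2.dotProduct_mulVec_nonneg x
    rw [star_trivial] at h1 h2
    have hz : x ⬝ᵥ (Xs *ᵥ x) = 0 := by linarith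
    exact (hXsP.2.dotProduct_mulVec_zero_iff x).mp (by rw [star_trivial]; exact hz)
  -- dimension count
  have hdim : ∀ M : Matrix (Fin r ⊕ Fin m) (Fin r ⊕ Fin m) ℝ,
      M.rank + Module.finrank ℝ (LinearMap.ker M.mulVecLin) = r + m := by
    intro M
    have h1 := LinearMap.finrank_range_add_finrank_ker M.mulVecLin
    rw [Module.finrank_fintype_fun_eq_card] at h1
    simpa [Matrix.rank] using h1
  have hfin : Module.finrank ℝ (LinearMap.ker X.mulVecLin)
      ≤ Module.finrank ℝ (LinearMap.ker C₂.mulVecLin) := by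
    have h1 := hdim X
    have h2 := hdim C₂
    omega
  have hkeq : LinearMap.ker C₂.mulVecLin = LinearMap.ker X.mulVecLin :=
    Submodule.eq_of_le_of_finrank_le hkCX hfin
  have hkXXs : LinearMap.ker X.mulVecLin ≤ LinearMap.ker Xs.mulVecLin := by
    rw [← hkeq]
    exact hkCXs
  -- Xs annihilates W
  have hXsW : Xs * W = 0 := by
    have hcol : ∀ j, Xs *ᵥ (W *ᵥ Pi.single j 1) = 0 := by
      intro j
      have hmem : W *ᵥ Pi.single j 1 ∈ LinearMap.ker X.mulVecLin := by
        rw [LinearMap.mem_ker, Matrix.mulVecLin_apply, mulVec_mulVec, hXW,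
          Matrix.zero_mulVec]
      have := hkXXs hmem
      rwa [LinearMap.mem_ker, Matrix.mulVecLin_apply] at this
    ext i j
    have h1 := congrFun (hcol j) i
    rw [mulVec_mulVec] at h1
    have h2 : ((Xs * W) *ᵥ Pi.single j 1) i = (Xs * W) i j := by
      rw [Matrix.mulVec_single]
      simp
    rw [h2] at h1
    simpa using h1
  -- conclude
  have hUtW : Uᵀ * W = Y + U₀ᵀ := by
    rw [hUdef, hWdef, transpose_fromRows, fromCols_mul_fromRows]
    simp
  have h5 : U * (Zs * (Y + U₀ᵀ)) = 0 := by
    rw [← hUtW, ← Matrix.mul_assoc, ← Matrix.mul_assoc, ← hXsU, hXsW]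
  have h6 : Zs * (Y + U₀ᵀ) = 0 := by
    ext i j
    have h1 := congrFun (congrFun h5 (Sum.inl i)) j
    rw [hUdef, fromRows_mul] at h1
    simpa [Matrix.fromRows_apply_inl] using h1
  have h7 : Y + U₀ᵀ = 0 := by
    have h1 : Zs⁻¹ * (Zs * (Y + U₀ᵀ)) = Zs⁻¹ * (0 : Matrix (Fin r) (Fin m) ℝ) := by rw [h6]
    rwa [← Matrix.mul_assoc, Matrix.nonsing_inv_mul _ ((Matrix.isUnit_iff_isUnit_det _).mp
      hZs.isUnit), Matrix.one_mul, Matrix.mul_zero] at h1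
  exact eq_neg_of_add_eq_zero_left h7
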